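/- Let T = q1⁴(3q1+q2)p1²/(q1−q2) + q2⁴(q1+3q2)p2²/(q2−q1) and K = q1²q2²(q1²p1−q2²p2)²(q1²p1+q2²p2)/(q1−q2)². Then {T,K} = 0 identically on the open set where q1 ≠ q2. -/

import Mathlib

/-- Canonical Poisson bracket of two functions on phase space (q1,q2,p1,p2). -/
noncomputable def pb (f g : ℝ → ℝ → ℝ → ℝ → ℝ) (q1 q2 p1 p2 : ℝ) : ℝ :=
  (deriv (fun x => f x q2 p1 p2) q1) * (deriv (fun x => g q1 q2 x p2) p1)
  - (deriv (fun x => f q1 q2 x p2) p1) * (deriv (fun x => g x q2 p1 p2) q1)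
  + (deriv (fun x => f q1 x p1 p2) q2) * (deriv (fun x => g q1 q2 p1 x) p2)
  - (deriv (fun x => f q1 q2 p1 x) p2) * (deriv (fun x => g q1 x p1 p2) q2)

noncomputable def T (q1 q2 p1 p2 : ℝ) : ℝ :=
  q1^4 * (3*q1 + q2) * p1^2 / (q1 - q2) + q2^4 * (q1 + 3*q2) * p2^2 / (q2 - q1)

noncomputable def K (q1 q2 p1 p2 : ℝ) : ℝ :=
  q1^2 * q2^2 * (q1^2*p1 - q2^2*p2)^2 * (q1^2*p1 + q2^2*p2) / (q1 - q2)^2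

set_option maxHeartbeats 2000000 in
theorem stmt11 (q1 q2 p1 p2 : ℝ) (h : q1 ≠ q2) :
    pb T K q1 q2 p1 p2 = 0 := by
  have h1 : q1 - q2 ≠ 0 := sub_ne_zero.mpr h
  have h2 : q2 - q1 ≠ 0 := sub_ne_zero.mpr h.symm
  -- ∂T/∂q1
  have hT1 : HasDerivAt (fun x : ℝ => x^4 * (3*x + q2) * p1^2 / (x - q2)
      + q2^4 * (x + 3*q2) * p2^2 / (q2 - x)) _ q1 :=
    ((((hasDerivAt_pow 4 q1).mul (((hasDerivAt_id' q1).const_mul 3).add_const q2)).mul_const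
        (p1^2)).div ((hasDerivAt_id' q1).sub_const q2) h1).add
      (((((hasDerivAt_id' q1).add_const (3*q2)).const_mul (q2^4)).mul_const (p2^2)).div
        ((hasDerivAt_id' q1).const_sub q2) h2)
  -- ∂T/∂q2
  have hT2 : HasDerivAt (fun x : ℝ => q1^4 * (3*q1 + x) * p1^2 / (q1 - x)
      + x^4 * (q1 + 3*x) * p2^2 / (x - q1)) _ q2 :=
    (((((hasDerivAt_id' q2).const_add (3*q1)).const_mul (q1^4)).mul_const (p1^2)).div
        ((hasDerivAt_id' q2).const_sub q1) h1).add
      ((((hasDerivAt_pow 4 q2).mul (((hasDerivAt_id' q2).const_mul 3).const_add q1)).mul_const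
        (p2^2)).div ((hasDerivAt_id' q2).sub_const q1) h2)
  -- ∂T/∂p1
  have hT3 : HasDerivAt (fun x : ℝ => q1^4 * (3*q1 + q2) * x^2 / (q1 - q2)
      + q2^4 * (q1 + 3*q2) * p2^2 / (q2 - q1)) _ p1 :=
    ((((hasDerivAt_pow 2 p1).const_mul (q1^4 * (3*q1 + q2))).div_const (q1 - q2)).add_const
      (q2^4 * (q1 + 3*q2) * p2^2 / (q2 - q1)))
  -- ∂T/∂p2
  have hT4 : HasDerivAt (fun x : ℝ => q1^4 * (3*q1 + q2) * p1^2 / (q1 - q2)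
      + q2^4 * (q1 + 3*q2) * x^2 / (q2 - q1)) _ p2 :=
    ((((hasDerivAt_pow 2 p2).const_mul (q2^4 * (q1 + 3*q2))).div_const (q2 - q1)).const_add
      (q1^4 * (3*q1 + q2) * p1^2 / (q1 - q2)))
  -- ∂K/∂q1
  have hK1 : HasDerivAt (fun x : ℝ => x^2 * q2^2 * (x^2*p1 - q2^2*p2)^2 * (x^2*p1 + q2^2*p2)
      / (x - q2)^2) _ q1 :=
    ((((hasDerivAt_pow 2 q1).mul_const (q2^2)).mul
        ((((hasDerivAt_pow 2 q1).mul_const p1).sub_const (q2^2*p2)).pow 2)).mul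
        (((hasDerivAt_pow 2 q1).mul_const p1).add_const (q2^2*p2))).div
      (((hasDerivAt_id' q1).sub_const q2).pow 2) (pow_ne_zero 2 h1)
  -- ∂K/∂q2
  have hK2 : HasDerivAt (fun x : ℝ => q1^2 * x^2 * (q1^2*p1 - x^2*p2)^2 * (q1^2*p1 + x^2*p2)
      / (q1 - x)^2) _ q2 :=
    ((((hasDerivAt_pow 2 q2).const_mul (q1^2)).mul
        ((((hasDerivAt_pow 2 q2).mul_const p2).const_sub (q1^2*p1)).pow 2)).mul
        (((hasDerivAt_pow 2 q2).mul_const p2).const_add (q1^2*p1))).div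
      (((hasDerivAt_id' q2).const_sub q1).pow 2) (pow_ne_zero 2 h1)
  -- ∂K/∂p1
  have hK3 : HasDerivAt (fun x : ℝ => q1^2 * q2^2 * (q1^2*x - q2^2*p2)^2 * (q1^2*x + q2^2*p2)
      / (q1 - q2)^2) _ p1 :=
    (((((((hasDerivAt_id' p1).const_mul (q1^2)).sub_const (q2^2*p2)).pow 2).const_mul
        (q1^2*q2^2)).mul (((hasDerivAt_id' p1).const_mul (q1^2)).add_const (q2^2*p2))).div_const
      ((q1 - q2)^2))
  -- ∂K/∂p2
  have hK4 : HasDerivAt (fun x : ℝ => q1^2 * q2^2 * (q1^2*p1 - q2^2*x)^2 * (q1^2*p1 + q2^2*x)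
      / (q1 - q2)^2) _ p2 :=
    (((((((hasDerivAt_id' p2).const_mul (q2^2)).const_sub (q1^2*p1)).pow 2).const_mul
        (q1^2*q2^2)).mul (((hasDerivAt_id' p2).const_mul (q2^2)).const_add (q1^2*p1))).div_const
      ((q1 - q2)^2))
  simp only [pb, T, K]
  rw [hT1.deriv, hT2.deriv, hT3.deriv, hT4.deriv, hK1.deriv, hK2.deriv, hK3.deriv, hK4.deriv]
  simp only [Pi.mul_apply, Pi.pow_apply]
  field_simp
  ring
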